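/- arXiv:1803.10897 — 6 statements merged into one kernel-verified Lean document; each statement's English description precedes it below -/
import Mathlib

section
/- Let (R, I) be a henselian pair of commutative rings. Then for every element s ∈ I and every integer n ≥ 1, the equation x − s·x^n = 1 has a solution x ∈ R. -/
/-!
Substituting `x = y⁻¹` turns `x - s xⁿ = 1` into the monic equation `yⁿ - yⁿ⁻¹ + s = 0`.
Modulo `I` it has the simple root `1` (the derivative there is `1`), so it has a root `y ≡ 1`
in `R`, and `y` is a unit because `I` lies in the Jacobson radical.
-/

open Polynomial

theorem sub_mul_pow_succ_eq_one_of_mul_eq_one {R : Type*} [CommRing R] {s x y : R} {m : ℕ}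
    (hxy : x * y = 1) (hy : y ^ (m + 1) - y ^ m + s = 0) : x - s * x ^ (m + 1) = 1 := by
  have hpow (k : ℕ) : x ^ k * y ^ k = 1 := by rw [← mul_pow, hxy, one_pow]
  linear_combination -x ^ (m + 1) * hy + hpow (m + 1) - x * hpow m

theorem monic_X_pow_succ_sub_X_pow_add_C {R : Type*} [CommRing R] (m : ℕ) (s : R) :
    (X ^ (m + 1) - X ^ m + C s : R[X]).Monic := by
  monicity!

theorem HenselianRing.exists_root_X_pow_succ_sub_X_pow_add_C {R : Type*} [CommRing R]
    (I : Ideal R) [HenselianRing R I] {s : R} (hs : s ∈ I) (m : ℕ) :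
    ∃ y : R, y ^ (m + 1) - y ^ m + s = 0 ∧ y - 1 ∈ I := by
  have hderiv : (X ^ (m + 1) - X ^ m + C s : R[X]).derivative.eval 1 = 1 := by
    simp [derivative_X_pow]
  obtain ⟨y, hy, hyI⟩ := HenselianRing.is_henselian _ (monic_X_pow_succ_sub_X_pow_add_C m s) 1
    (by simpa using hs) (by rw [hderiv, map_one]; exact isUnit_one)
  exact ⟨y, by simpa using hy, hyI⟩

/-- Let `(R, I)` be a henselian pair of commutative rings. Then for every `s ∈ I` and
every `n ≥ 1`, the equation `x - s * x ^ n = 1` has a solution in `R`. -/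
theorem henselian_pair_solve_eq (R : Type*) [CommRing R] (I : Ideal R) [HenselianRing R I]
    (s : R) (hs : s ∈ I) (n : ℕ) (hn : 1 ≤ n) :
    ∃ x : R, x - s * x ^ n = 1 := by
  obtain ⟨m, rfl⟩ := Nat.exists_eq_add_of_le' hn
  obtain ⟨y, hy, hyI⟩ := HenselianRing.exists_root_X_pow_succ_sub_X_pow_add_C I hs m
  obtain ⟨u, rfl⟩ := Ideal.isUnit_of_sub_one_mem_jacobson_bot y (HenselianRing.jac hyI)
  exact ⟨↑u⁻¹, sub_mul_pow_succ_eq_one_of_mul_eq_one u.inv_mul hy⟩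
end

section
/- Let R be a commutative ring and I ⊆ R an ideal with the following property: for every integer n ≥ 1 and every polynomial g ∈ R[X] all of whose coefficients lie in I, there exists x ∈ I with x·(1 + x)^{n−1} + g(x) = 0. Then 1 + y is a unit of R for every y ∈ I; equivalently, I is contained in the Jacobson radical of R. -/
/-! The case `n = 1`, `g = y (1 + X)` of the hypothesis gives `x ∈ I` with `x + y (1 + x) = 0`,
that is `(1 + y) (1 + x) = 1`. -/

open Polynomial

theorem one_add_mul_one_add_eq_one_of_add_mul_one_add_eq_zero {R : Type*} [Ring R] {x y : R}
    (h : x + y * (1 + x) = 0) : (1 + y) * (1 + x) = 1 := by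
  rw [add_mul, one_mul, add_assoc, h, add_zero]

theorem Ideal.le_jacobson_bot_of_forall_isUnit_one_add {R : Type*} [CommRing R] {I : Ideal R}
    (h : ∀ y ∈ I, IsUnit (1 + y)) : I ≤ (⊥ : Ideal R).jacobson := fun y hy =>
  Ideal.mem_jacobson_bot.2 fun z => add_comm 1 (y * z) ▸ h _ (I.mul_mem_right z hy)

/-- If an ideal `I` of a commutative ring `R` is henselian as a nonunital ring (i.e. for
every `n ≥ 1` and every polynomial `g` with coefficients in `I`, the equation
`x * (1 + x) ^ (n - 1) + g(x) = 0` has a solution `x ∈ I`), then `1 + y` is a unit for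
every `y ∈ I`; equivalently, `I` is contained in the Jacobson radical of `R`. -/
theorem henselian_nonunital_local (R : Type*) [CommRing R] (I : Ideal R)
    (h : ∀ n : ℕ, 1 ≤ n → ∀ g : Polynomial R, (∀ i, g.coeff i ∈ I) →
      ∃ x ∈ I, x * (1 + x) ^ (n - 1) + g.eval x = 0) :
    (∀ y ∈ I, IsUnit (1 + y)) ∧ I ≤ (⊥ : Ideal R).jacobson := by
  have one_add_isUnit : ∀ y ∈ I, IsUnit (1 + y) := by
    intro y hy
    have hg : ∀ i, (C y * (1 + X)).coeff i ∈ I :=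
      Ideal.mem_map_C_iff.1 (Ideal.mul_mem_right _ _ (Ideal.mem_map_of_mem C hy))
    obtain ⟨x, -, hx⟩ := h 1 le_rfl (C y * (1 + X)) hg
    simp only [Nat.sub_self, pow_zero, mul_one, eval_mul, eval_C, eval_add, eval_one,
      eval_X] at hx
    exact IsUnit.of_mul_eq_one _ (one_add_mul_one_add_eq_one_of_add_mul_one_add_eq_zero hx)
  exact ⟨one_add_isUnit, Ideal.le_jacobson_bot_of_forall_isUnit_one_add one_add_isUnit⟩
end

section
/- Let (R, I) be a henselian pair of commutative rings, and let M and N be finitely generated projective R-modules. If M/IM and N/IN are isomorphic as R/I-modules, then M and N are isomorphic as R-modules. -/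
/-!
Lift the isomorphism `M/IM ≅ N/IN` to a map `φ : M → N` using projectivity of `M`. Since `I` lies
in the Jacobson radical, Nakayama's lemma makes `φ` surjective. As `N` is projective, `φ` splits,
so `ker φ` is a finitely generated direct summand of `M`; it lies in `IM`, hence
`ker φ = ker φ ∩ IM = I • ker φ`, and Nakayama again gives `ker φ = 0`.
-/

open LinearMap

section

variable {R M N : Type*} [CommRing R] [AddCommGroup M] [Module R M] [AddCommGroup N] [Module R N]
  {I : Ideal R}

theorem LinearMap.isProj_ker_id_sub_comp {φ : M →ₗ[R] N} {s : N →ₗ[R] M} (hs : φ ∘ₗ s = id) :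
    IsProj (ker φ) (id - s ∘ₗ φ) where
  map_mem x := by
    rw [mem_ker, sub_apply, map_sub, id_apply, comp_apply, ← comp_apply φ s, hs, id_apply, sub_self]
  map_id x hx := by
    rw [mem_ker] at hx
    rw [sub_apply, id_apply, comp_apply, hx, map_zero, sub_zero]

theorem LinearMap.IsProj.le_smul_self_of_le_smul_top {K : Submodule R M} {q : M →ₗ[R] M}
    (hq : IsProj K q) (hK : K ≤ I • ⊤) : K ≤ I • K := by
  intro x hx
  have hqx : q x ∈ I • range q := by
    rw [range_eq_map, ← Submodule.map_smul'']
    exact Submodule.mem_map_of_mem (hK hx)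
  rwa [hq.map_id x hx, hq.range] at hqx

theorem LinearMap.injective_of_surjective_of_ker_le_smul_top [Module.Finite R M]
    [Module.Projective R N] (hI : I ≤ Ideal.jacobson ⊥) {φ : M →ₗ[R] N}
    (hφ : Function.Surjective φ) (hker : ker φ ≤ I • ⊤) : Function.Injective φ := by
  obtain ⟨s, hs⟩ := φ.exists_rightInverse_of_surjective (range_eq_top.mpr hφ)
  have hproj := isProj_ker_id_sub_comp hs
  have hfg : (ker φ).FG := by
    rw [← hproj.range, range_eq_map]
    exact Module.Finite.fg_top.map _
  rw [← ker_eq_bot]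
  exact Submodule.eq_bot_of_le_smul_of_le_jacobson_bot I _ hfg
    (hproj.le_smul_self_of_le_smul_top hker) hI

theorem LinearMap.bijective_of_comp_mkQ_eq [Module.Finite R M] [Module.Finite R N]
    [Module.Projective R N] (hI : I ≤ Ideal.jacobson ⊥) {φ : M →ₗ[R] N}
    (e : (M ⧸ (I • ⊤ : Submodule R M)) ≃ₗ[R] N ⧸ (I • ⊤ : Submodule R N))
    (he : (I • ⊤ : Submodule R N).mkQ ∘ₗ φ = e ∘ₗ (I • ⊤ : Submodule R M).mkQ) :
    Function.Bijective φ := by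
  have hsurj : Function.Surjective φ := φ.surjective_of_surjective_comp_mkQ I hI <| by
    rw [he, coe_comp]
    exact e.surjective.comp (Submodule.mkQ_surjective _)
  have hker : ker φ ≤ I • ⊤ :=
    calc ker φ ≤ ker ((I • ⊤ : Submodule R N).mkQ ∘ₗ φ) := ker_le_ker_comp φ _
      _ = I • ⊤ := by rw [he, LinearEquiv.ker_comp, Submodule.ker_mkQ]
  exact ⟨injective_of_surjective_of_ker_le_smul_top hI hsurj hker, hsurj⟩

end

/-- Let `(R, I)` be a henselian pair and `M`, `N` finitely generated projective
`R`-modules. If `M/IM ≅ N/IN` as `R/I`-modules, then `M ≅ N` as `R`-modules. -/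
theorem projective_iso_of_quotient_iso_henselian
    (R : Type*) [CommRing R] (I : Ideal R) [HenselianRing R I]
    (M N : Type*) [AddCommGroup M] [Module R M] [AddCommGroup N] [Module R N]
    [Module.Finite R M] [Module.Projective R M]
    [Module.Finite R N] [Module.Projective R N]
    (e : Nonempty ((M ⧸ (I • ⊤ : Submodule R M)) ≃ₗ[R ⧸ I]
      (N ⧸ (I • ⊤ : Submodule R N)))) :
    Nonempty (M ≃ₗ[R] N) := by
  obtain ⟨e⟩ := e
  let e' := e.restrictScalars R
  obtain ⟨φ, hφ⟩ := Module.projective_lifting_property (I • ⊤ : Submodule R N).mkQ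
    (e' ∘ₗ (I • ⊤ : Submodule R M).mkQ) (Submodule.mkQ_surjective _)
  exact ⟨.ofBijective φ (bijective_of_comp_mkQ_eq HenselianRing.jac e' hφ)⟩
end

section
/- Let C be a category admitting countable coproducts, and let ⋯ → F_r → F_{r−1} → ⋯ → F_1 be a tower of functors from C to the category of abelian groups, with transition natural transformations f_r : F_{r+1} → F_r. Suppose: (1) for each object X of C, the homomorphism Φ_X : ∏_{r≥1} F_r(X) → ∏_{r≥1} F_r(X) sending (a_r)_r to (a_r − f_r(a_{r+1}))_r is bijective (equivalently, the inverse limit and lim¹ of the tower of abelian groups {F_r(X)}_r both vanish); (2) for each r, the functor F_r preserves countable coproducts. Then the tower {F_r}_r is pro-zero: for every r there exists s > r such that the composite natural transformation F_s → F_r is zero. -/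
/-!
For fixed `r` the images of `F (r + k) X → F r X` decrease in `k`, and they stabilise uniformly
in `X`. Otherwise pick, for infinitely many `k`, an object `Y k` and an element of `F (r + k) (Y k)`
whose image does not lift one step further, and solve `Φ c = a` over `∐ Y`, where `a` puts these
elements into the summands. Telescoping the equation `c = a + f c` shows that the `k`-th component
of `c r ∈ F r (∐ Y) ≅ ⨁ F r (Y k)` is the chosen image plus an element of the next image; since
only finitely many components are nonzero, this is absurd. Once the images are stable, the stable
images form a subtower with surjective transition maps, so each of their elements extends to an
element of the inverse limit, which vanishes because `Φ` is injective.
-/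

open CategoryTheory

/-- The composite transition map `F (r + k) ⟶ F r` of a tower of functors
`⋯ → F_{r+1} → F_r → ⋯` into abelian groups. -/
def towerFunctorComp {C : Type*} [Category C] (F : ℕ → C ⥤ AddCommGrpCat)
    (f : ∀ r, F (r + 1) ⟶ F r) : ∀ (r k : ℕ), F (r + k) ⟶ F r
  | r, 0 => 𝟙 (F r)
  | r, k + 1 => f (r + k) ≫ towerFunctorComp F f r k

open Limits Filter

theorem exists_pi_add_left_eq {β : ℕ → Type*} [∀ n, Zero (β n)] (r : ℕ) (x : ∀ m, β (r + m)) :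
    ∃ y : ∀ n, β n, ∀ m, y (r + m) = x m := by
  classical
  refine ⟨fun n => if h : r ≤ n then cast (congrArg β (Nat.add_sub_cancel' h)) (x (n - r)) else 0,
    fun m => ?_⟩
  simp only [dif_pos (Nat.le_add_right r m)]
  exact eq_of_heq ((cast_heq _ _).trans (congr_arg_heq x (Nat.add_sub_cancel_left ..)))

section AbelianTower

variable {A : ℕ → Type*} [∀ n, AddCommGroup (A n)] (g : ∀ n, A (n + 1) →+ A n)

theorem eq_zero_of_forall_ge_eq_apply_succ (hΦ : Function.Injective
      fun (a : ∀ n, A n) n => a n - g n (a (n + 1))) :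
    ∀ (r : ℕ) (y : ∀ n, A n), (∀ n ≥ r, y n = g n (y (n + 1))) → ∀ n ≥ r, y n = 0
  | 0, y, hy => fun n _ =>
    congrFun (hΦ (a₂ := 0) (funext fun n => by simp [← hy n n.zero_le])) n
  | r + 1, y, hy => by
    classical
    -- Redefining `y` at `r` as `g r (y (r + 1))` makes it compatible from `r` on.
    have hy' := eq_zero_of_forall_ge_eq_apply_succ hΦ r (Function.update y r (g r (y (r + 1))))
      fun n hn => by
        rcases hn.eq_or_lt with rfl | hn
        · simp
        · simp [Function.update_of_ne hn.ne', Function.update_of_ne (by omega : n + 1 ≠ r),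
            hy n hn]
    intro n hn
    simpa [Function.update_of_ne (by omega : n ≠ r)] using hy' n (by omega)

theorem AddSubgroup.eq_bot_of_le_map_succ (hΦ : Function.Injective
      fun (a : ∀ n, A n) n => a n - g n (a (n + 1)))
    {I : ∀ n, AddSubgroup (A n)} (hI : ∀ n, I n ≤ (I (n + 1)).map (g n)) (r : ℕ) : I r = ⊥ := by
  refine (AddSubgroup.eq_bot_iff_forall _).2 fun x hx => ?_
  have hlift : ∀ n, ∀ a ∈ I n, ∃ b ∈ I (n + 1), g n b = a := fun n a ha => hI n ha
  choose lift hlift_mem hlift_eq using hlift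
  let z : ∀ m, I (r + m) := fun m => Nat.rec ⟨x, hx⟩ (fun m u => ⟨lift _ u.1 u.2, hlift_mem ..⟩) m
  obtain ⟨y, hy⟩ := exists_pi_add_left_eq r fun m => (z m).1
  have hcompat : ∀ n ≥ r, y n = g n (y (n + 1)) := by
    intro n hn
    obtain ⟨m, rfl⟩ := Nat.exists_eq_add_of_le hn
    rw [hy m, show y (r + m + 1) = z (m + 1) from hy (m + 1)]
    exact (hlift_eq _ _ _).symm
  rw [← show y r = x from hy 0]
  exact eq_zero_of_forall_ge_eq_apply_succ g hΦ r y hcompat r le_rfl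

end AbelianTower

section Coproduct

variable {C : Type*} [Category C] [HasColimitsOfShape (Discrete ℕ) C] (Y : ℕ → C)

noncomputable def coprodToDFinsupp (G : C ⥤ AddCommGrpCat)
    [PreservesColimitsOfShape (Discrete ℕ) G] :
    G.obj (∐ Y) ⟶ AddCommGrpCat.of (Π₀ k, G.obj (Y k)) :=
  Cofan.IsColimit.desc (isColimitOfHasCoproductOfPreservesColimit G Y) fun k =>
    AddCommGrpCat.ofHom (DFinsupp.singleAddHom (fun k => G.obj (Y k)) k)

theorem map_ι_comp_coprodToDFinsupp (G : C ⥤ AddCommGrpCat)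
    [PreservesColimitsOfShape (Discrete ℕ) G] (k : ℕ) :
    G.map (Sigma.ι Y k) ≫ coprodToDFinsupp Y G =
      AddCommGrpCat.ofHom (DFinsupp.singleAddHom (fun k => G.obj (Y k)) k) :=
  Cofan.IsColimit.fac (isColimitOfHasCoproductOfPreservesColimit G Y) _ k

theorem coprodToDFinsupp_map_ι (G : C ⥤ AddCommGrpCat)
    [PreservesColimitsOfShape (Discrete ℕ) G] (k : ℕ) (y : G.obj (Y k)) :
    coprodToDFinsupp Y G (G.map (Sigma.ι Y k) y) = DFinsupp.single k y :=
  ConcreteCategory.congr_hom (map_ι_comp_coprodToDFinsupp Y G k) y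

theorem coprodToDFinsupp_naturality {G G' : C ⥤ AddCommGrpCat}
    [PreservesColimitsOfShape (Discrete ℕ) G] [PreservesColimitsOfShape (Discrete ℕ) G']
    (φ : G ⟶ G') (z : G.obj (∐ Y)) (k : ℕ) :
    coprodToDFinsupp Y G' (φ.app _ z) k = φ.app (Y k) (coprodToDFinsupp Y G z k) := by
  have h : φ.app (∐ Y) ≫ coprodToDFinsupp Y G' = coprodToDFinsupp Y G ≫
      AddCommGrpCat.ofHom (DFinsupp.mapRange.addMonoidHom fun k => (φ.app (Y k)).hom) := by
    refine Cofan.IsColimit.hom_ext (isColimitOfHasCoproductOfPreservesColimit G Y) _ _ fun j => ?_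
    rw [cofan_mk_inj, NatTrans.naturality_assoc, map_ι_comp_coprodToDFinsupp, ← Category.assoc,
      map_ι_comp_coprodToDFinsupp]
    ext y
    simp
  simpa using congrArg (fun ψ => ψ.hom z k) h

theorem eventually_coprodToDFinsupp_eq_zero (G : C ⥤ AddCommGrpCat)
    [PreservesColimitsOfShape (Discrete ℕ) G] (z : G.obj (∐ Y)) :
    ∀ᶠ k in atTop, coprodToDFinsupp Y G z k = 0 := by
  classical
  rw [← Nat.cofinite_eq_atTop]
  filter_upwards [(coprodToDFinsupp Y G z).support.eventually_cofinite_notMem] with k hk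
  exact DFinsupp.notMem_support_iff.1 hk

end Coproduct

section Tower

variable {C : Type*} [Category C] (F : ℕ → C ⥤ AddCommGrpCat) (f : ∀ r, F (r + 1) ⟶ F r)

theorem towerFunctorComp_succ_left (r k : ℕ) :
    towerFunctorComp F f r (k + 1) =
      eqToHom (congrArg F (by omega)) ≫ towerFunctorComp F f (r + 1) k ≫ f r := by
  induction k with
  | zero => simp [towerFunctorComp]
  | succ k ih =>
    rw [towerFunctorComp, ih, towerFunctorComp, ← Category.assoc,
      eqToHom_naturality f (by omega : r + (k + 1) = r + 1 + k)]
    simp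

def towerRange (r k : ℕ) (X : C) : AddSubgroup ((F r).obj X) :=
  ((towerFunctorComp F f r k).app X).hom.range

theorem towerRange_succ_le (r k : ℕ) (X : C) :
    towerRange F f r (k + 1) X ≤ towerRange F f r k X := by
  rintro _ ⟨x, rfl⟩
  exact ⟨(f (r + k)).app X x, rfl⟩

theorem towerRange_antitone (r : ℕ) (X : C) : Antitone fun k => towerRange F f r k X :=
  antitone_nat_of_succ_le fun k => towerRange_succ_le F f r k X

theorem towerRange_succ_eq_map (r k : ℕ) (X : C) :
    towerRange F f r (k + 1) X = (towerRange F f (r + 1) k X).map ((f r).app X).hom := by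
  have h : r + (k + 1) = r + 1 + k := by omega
  ext x
  simp only [towerRange, AddSubgroup.mem_map, AddMonoidHom.mem_range]
  constructor
  · rintro ⟨y, rfl⟩
    exact ⟨_, ⟨_, rfl⟩, by rw [towerFunctorComp_succ_left]; rfl⟩
  · rintro ⟨_, ⟨y, rfl⟩, rfl⟩
    have e : eqToHom (congrArg F h.symm) ≫ towerFunctorComp F f r (k + 1) =
        towerFunctorComp F f (r + 1) k ≫ f r := by
      simp [towerFunctorComp_succ_left]
    exact ⟨_, congrArg (fun φ => φ.app X y) e⟩

theorem eq_sum_add_towerFunctorComp {X : C} {a c : ∀ s, (F s).obj X}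
    (hc : ∀ s, c s = a s + (f s).app X (c (s + 1))) (r n : ℕ) :
    c r = ∑ j ∈ Finset.range n, (towerFunctorComp F f r j).app X (a (r + j)) +
      (towerFunctorComp F f r n).app X (c (r + n)) := by
  induction n with
  | zero => simp [towerFunctorComp]
  | succ n ih =>
    rw [ih, hc (r + n), map_add, Finset.sum_range_succ]
    exact (add_assoc _ _ _).symm

theorem eventually_mem_towerRange_succ [HasColimitsOfShape (Discrete ℕ) C]
    [∀ s, PreservesColimitsOfShape (Discrete ℕ) (F s)] (r : ℕ) (Y : ℕ → C)
    (hsurj : Function.Surjective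
      fun (a : ∀ s, (F s).obj (∐ Y)) s => a s - (f s).app (∐ Y) (a (s + 1)))
    (α : ∀ k, (F (r + k)).obj (Y k)) :
    ∀ᶠ k in atTop,
      (towerFunctorComp F f r k).app (Y k) (α k) ∈ towerRange F f r (k + 1) (Y k) := by
  obtain ⟨a, ha⟩ := exists_pi_add_left_eq (β := fun s => (F s).obj (∐ Y)) r
    fun k => (F (r + k)).map (Sigma.ι Y k) (α k)
  obtain ⟨c, hc⟩ := hsurj a
  have hc' : ∀ s, c s = a s + (f s).app _ (c (s + 1)) := fun s => by
    rw [← congrFun hc s, sub_add_cancel]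
  have hterm : ∀ j, coprodToDFinsupp Y (F r) ((towerFunctorComp F f r j).app _ (a (r + j))) =
      DFinsupp.single j ((towerFunctorComp F f r j).app _ (α j)) := fun j => by
    rw [ha, NatTrans.naturality_apply, coprodToDFinsupp_map_ι]
  filter_upwards [eventually_coprodToDFinsupp_eq_zero Y (F r) (c r)] with k hk
  set e := coprodToDFinsupp Y (F (r + (k + 1))) (c (r + (k + 1))) k
  have hdecomp : coprodToDFinsupp Y (F r) (c r) k =
      (towerFunctorComp F f r k).app _ (α k) + (towerFunctorComp F f r (k + 1)).app _ e := by
    rw [eq_sum_add_towerFunctorComp F f hc' r (k + 1), map_add, map_sum, DFinsupp.add_apply,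
      DFinsupp.finsetSum_apply, coprodToDFinsupp_naturality]
    simp [hterm, e]
  exact ⟨-e, by rw [map_neg, neg_eq_iff_add_eq_zero, add_comm, ← hdecomp, hk]⟩

theorem eventually_towerRange_le_succ [HasColimitsOfShape (Discrete ℕ) C]
    [∀ s, PreservesColimitsOfShape (Discrete ℕ) (F s)]
    (hsurj : ∀ X, Function.Surjective
      fun (a : ∀ s, (F s).obj X) s => a s - (f s).app X (a (s + 1))) (r : ℕ) :
    ∀ᶠ k in atTop, ∀ X, towerRange F f r k X ≤ towerRange F f r (k + 1) X := by
  by_contra h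
  rw [Filter.not_eventually] at h
  -- `X₀` only serves as a dummy witness at the steps where the images do not drop.
  obtain ⟨X₀⟩ : Nonempty C := by
    obtain ⟨_, hk⟩ := h.exists
    exact ⟨(not_forall.1 hk).choose⟩
  have hwitness : ∀ k, ∃ (Y : C) (α : (F (r + k)).obj Y),
      (¬ ∀ X, towerRange F f r k X ≤ towerRange F f r (k + 1) X) →
        (towerFunctorComp F f r k).app Y α ∉ towerRange F f r (k + 1) Y := by
    intro k
    by_cases hk : ∀ X, towerRange F f r k X ≤ towerRange F f r (k + 1) X
    · exact ⟨X₀, 0, fun h => (h hk).elim⟩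
    · obtain ⟨Y, hY⟩ := not_forall.1 hk
      obtain ⟨_, ⟨α, rfl⟩, hα⟩ := SetLike.not_le_iff_exists.1 hY
      exact ⟨Y, α, fun _ => hα⟩
  choose Y α hYα using hwitness
  obtain ⟨k, hk, hmem⟩ :=
    (h.and_eventually (eventually_mem_towerRange_succ F f r Y (hsurj _) α)).exists
  exact hYα k hk hmem

theorem exists_towerRange_le [HasColimitsOfShape (Discrete ℕ) C]
    [∀ s, PreservesColimitsOfShape (Discrete ℕ) (F s)]
    (hsurj : ∀ X, Function.Surjective
      fun (a : ∀ s, (F s).obj X) s => a s - (f s).app X (a (s + 1))) (r : ℕ) :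
    ∃ K, ∀ k ≥ K, ∀ X, towerRange F f r K X ≤ towerRange F f r k X := by
  obtain ⟨K, hK⟩ := (eventually_towerRange_le_succ F f hsurj r).exists_forall_of_atTop
  refine ⟨K, fun k hk X => ?_⟩
  induction k, hk using Nat.le_induction with
  | base => exact le_rfl
  | succ k hk ih => exact ih.trans (hK k hk X)

end Tower

/-- Let `C` be a category admitting countable coproducts and `⋯ → F_{r+1} → F_r → ⋯ → F_0`
a tower of functors `C → Ab`.  Suppose (1) for each `X : C` the map
`(a_r)_r ↦ (a_r - f_r (a_{r+1}))_r` on `∏_r F_r(X)` is bijective (i.e. `lim` and `lim¹`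
of the tower `{F_r(X)}` vanish), and (2) each `F_r` preserves countable coproducts.
Then the tower `{F_r}` is pro-zero: for each `r` there is `s > r` (i.e. `s = r + k`,
`k > 0`) so that the composite `F_s ⟶ F_r` is the zero natural transformation. -/
theorem tower_of_functors_pro_zero {C : Type*} [Category C]
    [∀ (J : Type) [Countable J], Limits.HasColimitsOfShape (Discrete J) C]
    (F : ℕ → C ⥤ AddCommGrpCat) (f : ∀ r, F (r + 1) ⟶ F r)
    (h1 : ∀ X : C, Function.Bijective
      (fun (a : ∀ r, ((F r).obj X)) => (fun r => a r - ((f r).app X) (a (r + 1)) :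
        ∀ r, ((F r).obj X))))
    (h2 : ∀ (r : ℕ) (J : Type) [Countable J],
      Limits.PreservesColimitsOfShape (Discrete J) (F r)) :
    ∀ r : ℕ, ∃ k : ℕ, 0 < k ∧ towerFunctorComp F f r k = 0 := by
  have := fun s => h2 s ℕ
  choose K hK using exists_towerRange_le F f fun X => (h1 X).surjective
  have hstable_eq_bot : ∀ X r, towerRange F f r (K r) X = ⊥ := fun X =>
    AddSubgroup.eq_bot_of_le_map_succ (fun n => ((f n).app X).hom) (h1 X).injective fun n =>
      calc towerRange F f n (K n) X
          ≤ towerRange F f n (K n + K (n + 1) + 1) X := hK n _ (by omega) X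
        _ = (towerRange F f (n + 1) (K n + K (n + 1)) X).map ((f n).app X).hom :=
          towerRange_succ_eq_map F f n _ X
        _ ≤ (towerRange F f (n + 1) (K (n + 1)) X).map ((f n).app X).hom :=
          AddSubgroup.map_mono (towerRange_antitone F f (n + 1) X (by omega))
  intro r
  refine ⟨K r + 1, Nat.succ_pos _, ?_⟩
  ext X x
  have hx : (towerFunctorComp F f r (K r + 1)).app X x ∈ towerRange F f r (K r) X :=
    towerRange_antitone F f r X (Nat.le_succ _) ⟨x, rfl⟩
  simpa [hstable_eq_bot] using hx
end

section
/- Let k be a field of characteristic p > 0 and let s ≥ 1 be an integer. If an element u of the ring k[t]/(t^{ps}) satisfies u^p = 1, then the image of u under the canonical projection k[t]/(t^{ps}) → k[t]/(t^s) equals 1. In particular, the transition map (k[t]/(t^{ps}))^× → (k[t]/(t^s))^× kills all p-torsion, so the pro abelian group {(k[t]/(t^s))^×}_s has no p-torsion. -/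
open Polynomial

/-! In characteristic `p`, `u ^ p - 1 = (u - 1) ^ p`, so `u ^ p = 1` modulo `t ^ (p * s)` says
`(t ^ s) ^ p ∣ (f - 1) ^ p` for a lift `f`; in the integrally closed domain `k[t]` this gives
`t ^ s ∣ f - 1`. -/

section CharP

variable {R : Type*} [CommRing R] [IsDomain R] [IsIntegrallyClosed R]
  (p : ℕ) [hp : Fact p.Prime] [CharP R p]

theorem dvd_sub_one_of_pow_char_dvd_pow_char_sub_one {a f : R} (h : a ^ p ∣ f ^ p - 1) :
    a ∣ f - 1 := by
  rw [← IsIntegrallyClosed.pow_dvd_pow_iff hp.out.ne_zero, sub_pow_char, one_pow]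
  exact h

theorem Ideal.Quotient.factor_eq_one_of_pow_char_eq_one {a b : R} (hab : a ^ p ∣ b)
    {u : R ⧸ Ideal.span {b}} (hu : u ^ p = 1) :
    Ideal.Quotient.factor (Ideal.span_singleton_le_span_singleton.mpr
      ((dvd_pow_self a hp.out.ne_zero).trans hab)) u = 1 := by
  obtain ⟨f, rfl⟩ := Ideal.Quotient.mk_surjective u
  have hfp : b ∣ f ^ p - 1 := by
    rwa [← map_pow, ← sub_eq_zero, ← map_one (Ideal.Quotient.mk _), ← map_sub,
      Ideal.Quotient.eq_zero_iff_mem, Ideal.mem_span_singleton] at hu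
  rw [Ideal.Quotient.factor_mk, ← sub_eq_zero, ← map_one (Ideal.Quotient.mk _), ← map_sub,
    Ideal.Quotient.eq_zero_iff_mem, Ideal.mem_span_singleton]
  exact dvd_sub_one_of_pow_char_dvd_pow_char_sub_one p (hab.trans hfp)

end CharP

theorem truncated_poly_transition_kills_p_torsion_general
    (k : Type*) [Field k] (p : ℕ) [hp : Fact p.Prime] [CharP k p]
    (s : ℕ)
    (u : k[X] ⧸ (Ideal.span {X ^ (p * s)} : Ideal k[X]))
    (hu : u ^ p = 1) :
    Ideal.Quotient.factor (S := Ideal.span {X ^ (p * s)}) (T := Ideal.span {X ^ s})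
      (Ideal.span_singleton_le_span_singleton.mpr
        (pow_dvd_pow X (Nat.le_mul_of_pos_left s hp.out.pos))) u = 1 :=
  Ideal.Quotient.factor_eq_one_of_pow_char_eq_one p (by rw [← pow_mul, mul_comm]) hu

/-- Let `k` be a field of characteristic `p > 0` and `s ≥ 1`.  If `u ∈ k[t]/(t^{p·s})`
satisfies `u ^ p = 1`, then the image of `u` under the canonical projection
`k[t]/(t^{p·s}) → k[t]/(t^s)` equals `1`.  In particular the transition maps of the tower
`{(k[t]/(t^s))ˣ}` kill all `p`-torsion. -/
theorem truncated_poly_transition_kills_p_torsion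
    (k : Type*) [Field k] (p : ℕ) [hp : Fact p.Prime] [CharP k p]
    (s : ℕ) (hs : 1 ≤ s)
    (u : k[X] ⧸ (Ideal.span {X ^ (p * s)} : Ideal k[X]))
    (hu : u ^ p = 1) :
    Ideal.Quotient.factor (S := Ideal.span {X ^ (p * s)}) (T := Ideal.span {X ^ s})
      (Ideal.span_singleton_le_span_singleton.mpr
        (pow_dvd_pow X (Nat.le_mul_of_pos_left s hp.out.pos))) u = 1 :=
  truncated_poly_transition_kills_p_torsion_general k p (hp := hp) s u hu
end

section
/- Let R be a commutative noetherian ring, p a prime number, and let R̂ denote the p-adic completion of R (the inverse limit of the quotients R/p^nR). Then the canonical map R → R̂ induces (i) an isomorphism R/pR → R̂/pR̂, and (ii) a bijection from {x ∈ R : p·x = 0} to {x ∈ R̂ : p·x = 0}. (Together these say that R → R̂ induces an equivalence R ⊗^L_ℤ 𝔽_p ≃ R̂ ⊗^L_ℤ 𝔽_p.) -/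
/-!
The map `R̂ → R/p` reading off the first coordinate is surjective with kernel `pR̂`, so
`R/p → R̂/pR̂` is an isomorphism. For the torsion,
`p`-adic completion is exact on finite modules over a noetherian ring (Artin–Rees), so the
`p`-torsion of `R̂` is the completion of the `p`-torsion `R[p]` of `R`; and `R[p]`, being killed
by `p`, is its own completion.
-/

universe u

theorem IsAdicComplete.of_smul_top_eq_bot {R M : Type*} [CommRing R] [AddCommGroup M]
    [Module R M] {I : Ideal R} (h : I • (⊤ : Submodule R M) = ⊥) : IsAdicComplete I M where
  haus' x hx := by simpa [h, SModEq.bot] using hx 1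
  prec' f hf := by
    refine ⟨f 1, fun n => ?_⟩
    rcases n with - | n
    · simp [SModEq.top]
    · have h1n := hf (Nat.le_add_left 1 n)
      rw [pow_one, h, SModEq.bot] at h1n
      rw [h1n]

instance Submodule.isAdicComplete_span_singleton_torsionBy {R M : Type*} [CommRing R]
    [AddCommGroup M] [Module R M] (r : R) :
    IsAdicComplete (Ideal.span {r}) (Submodule.torsionBy R M r) := by
  refine IsAdicComplete.of_smul_top_eq_bot ?_
  rw [Submodule.ideal_span_singleton_smul, eq_bot_iff]
  rintro _ ⟨x, -, rfl⟩
  exact (Submodule.mem_bot R).mpr (Subtype.ext x.2)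

namespace AdicCompletion

theorem quotientMap_algebraMap_bijective {R : Type*} [CommRing R] (I : Ideal R) (fg : I.FG)
    {J : Ideal (AdicCompletion I R)} (hJ : I.map (algebraMap R (AdicCompletion I R)) = J)
    (h : I ≤ J.comap (algebraMap R (AdicCompletion I R))) :
    Function.Bijective (Ideal.quotientMap J (algebraMap R (AdicCompletion I R)) h) := by
  have hker : RingHom.ker (evalOneₐ I).toRingHom = J := hJ ▸ ker_evalOneₐ_eq_map I fg
  refine ⟨Ideal.quotientMap_injective' fun x hx => ?_, fun y => ?_⟩
  · rw [Ideal.mem_comap, ← hker, RingHom.mem_ker] at hx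
    exact Ideal.Quotient.eq_zero_iff_mem.mp hx
  · obtain ⟨y, rfl⟩ := Ideal.Quotient.mk_surjective y
    obtain ⟨x, hx⟩ := Ideal.Quotient.mk_surjective (evalOneₐ I y)
    refine ⟨Ideal.Quotient.mk I x, ?_⟩
    rw [Ideal.quotientMap_mk, Ideal.Quotient.eq, ← hker, RingHom.mem_ker, map_sub]
    simp [hx]

theorem map_toLinearMap_apply {R M : Type*} [CommRing R] (I : Ideal R) [AddCommGroup M]
    [Module R M] (r : R) (x : AdicCompletion I M) :
    map I (DistribSMul.toLinearMap R M r) x = r • x := by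
  induction x using induction_on with
  | h a => rfl

variable {R M N : Type u} [CommRing R] [IsNoetherianRing R] (I : Ideal R)
  [AddCommGroup M] [Module R M] [Module.Finite R M] [AddCommGroup N] [Module R N]

theorem ker_map [Module.Finite R N] (f : M →ₗ[R] N) :
    LinearMap.ker (map I f) = LinearMap.range (map I (LinearMap.ker f).subtype) := by
  have hexact : Function.Exact (map I (LinearMap.ker f).subtype) (map I f.rangeRestrict) :=
    map_exact (LinearMap.ker f).injective_subtype
      (by rw [LinearMap.exact_iff, LinearMap.ker_rangeRestrict, Submodule.range_subtype])
      f.surjective_rangeRestrict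
  ext y
  have hfactor : map I (LinearMap.range f).subtype (map I f.rangeRestrict y) = map I f y := by
    rw [map_comp_apply, LinearMap.subtype_comp_codRestrict]
  rw [LinearMap.mem_ker, LinearMap.mem_range, ← Set.mem_range, ← hexact y, ← hfactor,
    (map_injective I (LinearMap.range f).injective_subtype).eq_iff' (_root_.map_zero _)]

theorem of_bijOn_torsionBy (r : R) [IsAdicComplete I (Submodule.torsionBy R M r)] :
    Set.BijOn (of I M) (Submodule.torsionBy R M r)
      (Submodule.torsionBy R (AdicCompletion I M) r) := by
  have hinj := (map_injective I (Submodule.torsionBy R M r).injective_subtype).comp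
    (of_injective I (Submodule.torsionBy R M r))
  have hsurj := of_surjective I (Submodule.torsionBy R M r)
  refine ⟨fun x hx => ?_, fun x hx y hy hxy => ?_, fun y hy => ?_⟩
  · rw [SetLike.mem_coe, Submodule.mem_torsionBy_iff, ← map_smul,
      (Submodule.mem_torsionBy_iff _ _).mp hx, _root_.map_zero]
  · exact congrArg Subtype.val (@hinj ⟨x, hx⟩ ⟨y, hy⟩ hxy)
  · obtain ⟨z, rfl⟩ := (ker_map I (DistribSMul.toLinearMap R M r)).le
      (by rwa [LinearMap.mem_ker, map_toLinearMap_apply])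
    obtain ⟨t, rfl⟩ := hsurj z
    exact ⟨t, t.2, rfl⟩

end AdicCompletion

open AdicCompletion in
/-- Let `R` be a commutative noetherian ring, `p` a prime, and `R̂` the `p`-adic
completion of `R` (the inverse limit of the `R/p^n R`).  Then the canonical map
`R → R̂` induces (i) an isomorphism `R/pR ≅ R̂/pR̂` and (ii) a bijection between the
`p`-torsion of `R` and the `p`-torsion of `R̂`.  (Together: `R ⊗^L ℤ/p ≃ R̂ ⊗^L ℤ/p`.) -/
theorem noetherian_p_adic_completion_mod_p
    (R : Type*) [CommRing R] [IsNoetherianRing R] (p : ℕ) :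
    Function.Bijective
      (Ideal.quotientMap
        (Ideal.span {(p : AdicCompletion (Ideal.span {(p : R)}) R)})
        (algebraMap R (AdicCompletion (Ideal.span {(p : R)}) R))
        (by
          rw [Ideal.span_le, Set.singleton_subset_iff, SetLike.mem_coe, Ideal.mem_comap,
            map_natCast]
          exact Ideal.subset_span rfl)) ∧
    Set.BijOn (algebraMap R (AdicCompletion (Ideal.span {(p : R)}) R))
      {x : R | (p : R) * x = 0}
      {y : AdicCompletion (Ideal.span {(p : R)}) R | (p : _) * y = 0} := by
  set I := Ideal.span {(p : R)}
  refine ⟨quotientMap_algebraMap_bijective I (Submodule.fg_span_singleton _)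
    (by rw [Ideal.map_span, Set.image_singleton, map_natCast]) _, ?_⟩
  convert of_bijOn_torsionBy I (M := R) (p : R) using 1
  · exact funext (algebraMap_apply I)
  all_goals ext; simp [Nat.cast_smul_eq_nsmul]
end
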